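/- Remark 2 (necessary condition for the constraint of Theorem 1). Let (Q,U0,U1,U2,V0,V1,V2,X1,X2,Y1,Y2,Z) be finite random variables whose joint pmf factors as p(q)·p(u0|q)·p(u1,u2|u0)·p(v0|q)·p(v1,v2|v0)·p(x1|u0,u1,u2)·p(x2|v0,v1,v2)·p(y1,y2,z|x1,x2). If the inequality I(U1,U2,V1,V2;Z|U0,V0) ≤ I(U1,V1;Z|U0,V0) + I(U2,V2;Z|U0,V0) − I(U1;U2|U0) − I(V1;V2|V0) holds, then necessarily I(U1,V1;U2,V2|Q,U0,V0,Z) = 0. -/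

import Mathlib

set_option synthInstance.maxSize 4000
set_option maxHeartbeats 1000000

open Finset Filter

noncomputable def entRV {Ω : Type*} [Fintype Ω] {α : Type*} [Fintype α] [DecidableEq α]
    (p : Ω → ℝ) (X : Ω → α) : ℝ :=
  -∑ a : α, (∑ ω : Ω, if X ω = a then p ω else 0) *
      Real.logb 2 (∑ ω : Ω, if X ω = a then p ω else 0)

noncomputable def condEntRV {Ω : Type*} [Fintype Ω] {α β : Type*} [Fintype α] [DecidableEq α]
    [Fintype β] [DecidableEq β] (p : Ω → ℝ) (X : Ω → α) (Y : Ω → β) : ℝ :=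
  entRV p (fun ω => (X ω, Y ω)) - entRV p Y

noncomputable def miRV {Ω : Type*} [Fintype Ω] {α β : Type*} [Fintype α] [DecidableEq α]
    [Fintype β] [DecidableEq β] (p : Ω → ℝ) (X : Ω → α) (Y : Ω → β) : ℝ :=
  entRV p X + entRV p Y - entRV p (fun ω => (X ω, Y ω))

noncomputable def cmiRV {Ω : Type*} [Fintype Ω] {α β γ : Type*} [Fintype α] [DecidableEq α]
    [Fintype β] [DecidableEq β] [Fintype γ] [DecidableEq γ]
    (p : Ω → ℝ) (X : Ω → α) (Y : Ω → β) (Z : Ω → γ) : ℝ :=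
  entRV p (fun ω => (X ω, Z ω)) + entRV p (fun ω => (Y ω, Z ω))
    - entRV p (fun ω => (X ω, Y ω, Z ω)) - entRV p Z

def IsPMF {α : Type*} [Fintype α] (p : α → ℝ) : Prop :=
  (∀ a, 0 ≤ p a) ∧ ∑ a, p a = 1

def IsKernel {α β : Type*} [Fintype β] (k : α → β → ℝ) : Prop :=
  ∀ a, (∀ b, 0 ≤ k a b) ∧ ∑ b, k a b = 1

structure Channel2 (X1 X2 Y1 Y2 Zc : Type) [Fintype X1] [Fintype X2]
    [Fintype Y1] [Fintype Y2] [Fintype Zc] where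
  W : X1 → X2 → Y1 → Y2 → Zc → ℝ
  nonneg : ∀ x1 x2 y1 y2 z, 0 ≤ W x1 x2 y1 y2 z
  sum_one : ∀ x1 x2, ∑ y1 : Y1, ∑ y2 : Y2, ∑ z : Zc, W x1 x2 y1 y2 z = 1

structure Code2 (X1 X2 Y1 Y2 : Type) [Fintype X1] [Fintype X2]
    (n M1 M2 : ℕ) where
  enc1 : Fin M1 → (Fin n → X1) → ℝ
  enc1_nonneg : ∀ w x, 0 ≤ enc1 w x
  enc1_sum_one : ∀ w, ∑ x : Fin n → X1, enc1 w x = 1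
  enc2 : Fin M2 → (Fin n → X2) → ℝ
  enc2_nonneg : ∀ w x, 0 ≤ enc2 w x
  enc2_sum_one : ∀ w, ∑ x : Fin n → X2, enc2 w x = 1
  dec1 : (Fin n → Y1) → Fin M1 × Fin M2
  dec2 : (Fin n → Y2) → Fin M1 × Fin M2

section ChannelDefs

variable {X1 X2 Y1 Y2 Zc : Type} [Fintype X1] [DecidableEq X1] [Fintype X2] [DecidableEq X2]
  [Fintype Y1] [DecidableEq Y1] [Fintype Y2] [DecidableEq Y2] [Fintype Zc] [DecidableEq Zc]

noncomputable def jointPMF (ch : Channel2 X1 X2 Y1 Y2 Zc) {n M1 M2 : ℕ}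
    (c : Code2 X1 X2 Y1 Y2 n M1 M2) :
    Fin M1 × Fin M2 × (Fin n → X1) × (Fin n → X2) × (Fin n → Y1) × (Fin n → Y2) ×
      (Fin n → Zc) → ℝ :=
  fun ω => ((M1 : ℝ) * (M2 : ℝ))⁻¹ * c.enc1 ω.1 ω.2.2.1 * c.enc2 ω.2.1 ω.2.2.2.1 *
    ∏ i : Fin n, ch.W (ω.2.2.1 i) (ω.2.2.2.1 i) (ω.2.2.2.2.1 i) (ω.2.2.2.2.2.1 i)
      (ω.2.2.2.2.2.2 i)

noncomputable def errProb (ch : Channel2 X1 X2 Y1 Y2 Zc) {n M1 M2 : ℕ}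
    (c : Code2 X1 X2 Y1 Y2 n M1 M2) : ℝ :=
  ∑ ω : Fin M1 × Fin M2 × (Fin n → X1) × (Fin n → X2) × (Fin n → Y1) × (Fin n → Y2) ×
      (Fin n → Zc),
    if c.dec1 ω.2.2.2.2.1 ≠ (ω.1, ω.2.1) ∨ c.dec2 ω.2.2.2.2.2.1 ≠ (ω.1, ω.2.1) then
      jointPMF ch c ω else 0

noncomputable def leak (ch : Channel2 X1 X2 Y1 Y2 Zc) {n M1 M2 : ℕ}
    (c : Code2 X1 X2 Y1 Y2 n M1 M2) : ℝ :=
  miRV (jointPMF ch c) (fun ω => (ω.1, ω.2.1)) (fun ω => ω.2.2.2.2.2.2)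

/-- A rate pair is achievable under weak secrecy. -/
def AchievableWeak (ch : Channel2 X1 X2 Y1 Y2 Zc) (R1 R2 : ℝ) : Prop :=
  ∃ (M1 M2 : ℕ → ℕ) (c : ∀ n, Code2 X1 X2 Y1 Y2 n (M1 n) (M2 n)),
    (∀ n : ℕ, (2 : ℝ) ^ ((n : ℝ) * R1) ≤ (M1 n : ℝ)) ∧
    (∀ n : ℕ, (2 : ℝ) ^ ((n : ℝ) * R2) ≤ (M2 n : ℝ)) ∧
    Tendsto (fun n : ℕ => errProb ch (c n)) atTop (nhds 0) ∧
    Tendsto (fun n : ℕ => ((n : ℝ))⁻¹ * leak ch (c n)) atTop (nhds 0)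

/-- A rate pair is achievable under strong secrecy. -/
def AchievableStrong (ch : Channel2 X1 X2 Y1 Y2 Zc) (R1 R2 : ℝ) : Prop :=
  ∃ (M1 M2 : ℕ → ℕ) (c : ∀ n, Code2 X1 X2 Y1 Y2 n (M1 n) (M2 n)),
    (∀ n : ℕ, (2 : ℝ) ^ ((n : ℝ) * R1) ≤ (M1 n : ℝ)) ∧
    (∀ n : ℕ, (2 : ℝ) ^ ((n : ℝ) * R2) ≤ (M2 n : ℝ)) ∧
    Tendsto (fun n : ℕ => errProb ch (c n)) atTop (nhds 0) ∧
    Tendsto (fun n : ℕ => leak ch (c n)) atTop (nhds 0)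

end ChannelDefs

structure SL (Q U0 U1 U2 V0 V1 V2 X1 X2 Y1 Y2 Zc : Type) where
  q : Q
  u0 : U0
  u1 : U1
  u2 : U2
  v0 : V0
  v1 : V1
  v2 : V2
  x1 : X1
  x2 : X2
  y1 : Y1
  y2 : Y2
  z : Zc
  deriving DecidableEq

def SL.equivProd {Q U0 U1 U2 V0 V1 V2 X1 X2 Y1 Y2 Zc : Type} :
    SL Q U0 U1 U2 V0 V1 V2 X1 X2 Y1 Y2 Zc ≃
      Q × U0 × U1 × U2 × V0 × V1 × V2 × X1 × X2 × Y1 × Y2 × Zc where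
  toFun s := (s.q, s.u0, s.u1, s.u2, s.v0, s.v1, s.v2, s.x1, s.x2, s.y1, s.y2, s.z)
  invFun p := ⟨p.1, p.2.1, p.2.2.1, p.2.2.2.1, p.2.2.2.2.1, p.2.2.2.2.2.1,
    p.2.2.2.2.2.2.1, p.2.2.2.2.2.2.2.1, p.2.2.2.2.2.2.2.2.1, p.2.2.2.2.2.2.2.2.2.1,
    p.2.2.2.2.2.2.2.2.2.2.1, p.2.2.2.2.2.2.2.2.2.2.2⟩
  left_inv _ := rfl
  right_inv _ := rfl

instance {Q U0 U1 U2 V0 V1 V2 X1 X2 Y1 Y2 Zc : Type} [Fintype Q] [Fintype U0]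
    [Fintype U1] [Fintype U2] [Fintype V0] [Fintype V1] [Fintype V2] [Fintype X1]
    [Fintype X2] [Fintype Y1] [Fintype Y2] [Fintype Zc] :
    Fintype (SL Q U0 U1 U2 V0 V1 V2 X1 X2 Y1 Y2 Zc) :=
  Fintype.ofEquiv _ SL.equivProd.symm

/-
Write `A = (U1,V1)`, `B = (U2,V2)` and `C = (U0,V0)`. The identity
`I(A;B|Z,C) = I(A;B|C) + I(A,B;Z|C) - I(A;Z|C) - I(B;Z|C)` turns the constraint into
`I(A;B|Z,C) ≤ I(A;B|C) - I(U1;U2|U0) - I(V1;V2|V0)`. Under the factorization the block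
`(U1,U2)` is independent of `(V0,V1,V2)` given `U0`, and `(V1,V2)` of `U0` given `V0`; this
splits `I(A;B|C)` into `I(U1;U2|U0) + I(V1;V2|V0)`, so `I(A;B|Z,C) = 0`. Finally `Q` is
independent of `(A,B)` given `(C,Z)`, so conditioning on `Q` as well keeps the mutual
information at zero.
-/

theorem sub_mul_div_le_mul_logb {a b c d : ℝ} (ha : 0 ≤ a) (hb : a ≤ b) (hc : a ≤ c)
    (hd : a ≤ d) :
    (a - b * c / d) / Real.log 2 ≤
      a * (Real.logb 2 a + Real.logb 2 d - Real.logb 2 b - Real.logb 2 c) := by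
  have hlog2 : 0 < Real.log 2 := Real.log_pos one_lt_two
  rcases ha.eq_or_lt with rfl | ha
  · rw [zero_mul, zero_sub, neg_div]
    exact neg_nonpos.2 (div_nonneg (div_nonneg (mul_nonneg hb hc) hd) hlog2.le)
  have hb' := ha.trans_le hb
  have hc' := ha.trans_le hc
  have hd' := ha.trans_le hd
  have hq : 0 < b * c / d := by positivity
  have hlogs : Real.logb 2 a + Real.logb 2 d - Real.logb 2 b - Real.logb 2 c =
      Real.log (a / (b * c / d)) / Real.log 2 := by
    rw [← Real.logb, Real.logb_div ha.ne' hq.ne', Real.logb_div (by positivity) hd'.ne',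
      Real.logb_mul hb'.ne' hc'.ne']
    ring
  rw [hlogs, ← mul_div_assoc]
  gcongr
  have := Real.one_sub_inv_le_log_of_pos (div_pos ha hq)
  rw [inv_div] at this
  calc a - b * c / d = a * (1 - b * c / d / a) := by field_simp
    _ ≤ _ := by gcongr

theorem sum_triple_eq_sum_sum_sum {α β γ : Type*} [Fintype α] [Fintype β] [Fintype γ]
    (F : α × β × γ → ℝ) : ∑ v, F v = ∑ c, ∑ a, ∑ b, F (a, b, c) := by
  simp only [Fintype.sum_prod_type]
  exact (Finset.sum_congr rfl fun _ _ => Finset.sum_comm).trans Finset.sum_comm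

noncomputable def lawRV {Ω : Type*} [Fintype Ω] {α : Type*} [DecidableEq α]
    (p : Ω → ℝ) (X : Ω → α) (a : α) : ℝ :=
  ∑ ω, if X ω = a then p ω else 0

section Law

variable {Ω α β γ : Type*} [Fintype Ω] [DecidableEq α] [DecidableEq β] [DecidableEq γ]
  {p : Ω → ℝ}

theorem lawRV_nonneg (hp : ∀ ω, 0 ≤ p ω) (X : Ω → α) (a : α) : 0 ≤ lawRV p X a :=
  Finset.sum_nonneg fun ω _ => by split_ifs <;> simp [hp ω]

theorem lawRV_comp [Fintype α] (p : Ω → ℝ) (X : Ω → α) (f : α → β) (b : β) :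
    lawRV p (fun ω => f (X ω)) b = ∑ a, if f a = b then lawRV p X a else 0 :=
  calc ∑ ω, (if f (X ω) = b then p ω else 0)
      = ∑ ω, ∑ a, if X ω = a then (if f a = b then p ω else 0) else 0 := by simp
    _ = ∑ a, ∑ ω, if X ω = a then (if f a = b then p ω else 0) else 0 := Finset.sum_comm
    _ = _ := Finset.sum_congr rfl fun a _ => by by_cases h : f a = b <;> simp [lawRV, h]

theorem lawRV_le_lawRV_comp (hp : ∀ ω, 0 ≤ p ω) (X : Ω → α) (f : α → β) (a : α) :
    lawRV p X a ≤ lawRV p (fun ω => f (X ω)) (f a) :=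
  Finset.sum_le_sum fun ω _ => by
    by_cases h : X ω = a
    · simp [h]
    · simp only [h, if_false]; split_ifs <;> simp [hp ω]

theorem lawRV_comp_of_injective (p : Ω → ℝ) (X : Ω → α) {f : α → β}
    (hf : Function.Injective f) (a : α) :
    lawRV p (fun ω => f (X ω)) (f a) = lawRV p X a := by
  simp [lawRV, hf.eq_iff]

theorem lawRV_snd_eq_sum [Fintype α] (p : Ω → ℝ) (X : Ω → α) (Z : Ω → γ) (c : γ) :
    lawRV p Z c = ∑ a, lawRV p (fun ω => (X ω, Z ω)) (a, c) := by
  simp only [lawRV]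
  rw [Finset.sum_comm]
  refine Finset.sum_congr rfl fun ω _ => ?_
  by_cases h : Z ω = c <;> simp [h]

theorem lawRV_pair_eq_sum [Fintype β] (p : Ω → ℝ) (X : Ω → α) (Y : Ω → β) (Z : Ω → γ)
    (a : α) (c : γ) :
    lawRV p (fun ω => (X ω, Z ω)) (a, c) = ∑ b, lawRV p (fun ω => (X ω, Y ω, Z ω)) (a, b, c) := by
  simp only [lawRV]
  rw [Finset.sum_comm]
  refine Finset.sum_congr rfl fun ω _ => ?_
  simp only [Prod.mk.injEq]
  rw [Finset.sum_eq_single (Y ω) (fun b _ hb => by simp [Ne.symm hb]) (by simp)]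
  simp

variable [Fintype α] [Fintype β]

theorem lawRV_fst_equiv {R : Type*} [Fintype R] (p : Ω → ℝ) (e : Ω ≃ α × R) (a : α) :
    lawRV p (fun ω => (e ω).1) a = ∑ r, p (e.symm (a, r)) := by
  rw [lawRV, ← e.symm.sum_comp, Fintype.sum_prod_type]
  simp

theorem lawRV_eq_sum_sum (p : Ω → ℝ) (X : Ω → α) (Y : Ω → β) (Z : Ω → γ) (c : γ) :
    lawRV p Z c = ∑ a, ∑ b, lawRV p (fun ω => (X ω, Y ω, Z ω)) (a, b, c) := by
  rw [lawRV_snd_eq_sum p Y Z c, Finset.sum_comm]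
  exact Finset.sum_congr rfl fun b _ => lawRV_snd_eq_sum p X (fun ω => (Y ω, Z ω)) (b, c)

theorem entRV_eq_lawRV (p : Ω → ℝ) (X : Ω → α) :
    entRV p X = -∑ a, lawRV p X a * Real.logb 2 (lawRV p X a) := rfl

theorem entRV_comp_eq_sum (p : Ω → ℝ) (X : Ω → α) (f : α → β) :
    entRV p (fun ω => f (X ω)) =
      -∑ a, lawRV p X a * Real.logb 2 (lawRV p (fun ω => f (X ω)) (f a)) := by
  rw [entRV_eq_lawRV]
  congr 1
  conv_lhs => enter [2, b, 1]; rw [lawRV_comp p X f b]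
  simp only [Finset.sum_mul, ite_mul, zero_mul]
  rw [Finset.sum_comm]
  simp

theorem entRV_congr (p : Ω → ℝ) {X : Ω → α} {X' : Ω → β} {f : α → β}
    (hf : Function.Injective f) (hX : ∀ ω, X' ω = f (X ω)) : entRV p X' = entRV p X := by
  obtain rfl : X' = fun ω => f (X ω) := funext hX
  rw [entRV_comp_eq_sum, entRV_eq_lawRV]
  simp only [lawRV_comp_of_injective p X hf]

end Law

section CondMutualInfo

variable {Ω α β γ δ ε ζ : Type*} [Fintype Ω] [Fintype α] [DecidableEq α] [Fintype β]
  [DecidableEq β] [Fintype γ] [DecidableEq γ] [Fintype δ] [DecidableEq δ] [Fintype ε]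
  [DecidableEq ε] [Fintype ζ] [DecidableEq ζ] {p : Ω → ℝ}

theorem sum_lawRV_mul_lawRV_div (p : Ω → ℝ) (X : Ω → α) (Y : Ω → β) (Z : Ω → γ) :
    ∑ v : α × β × γ, lawRV p (fun ω => (X ω, Z ω)) (v.1, v.2.2) *
      lawRV p (fun ω => (Y ω, Z ω)) v.2 / lawRV p Z v.2.2 =
    ∑ v, lawRV p (fun ω => (X ω, Y ω, Z ω)) v := by
  rw [sum_triple_eq_sum_sum_sum, sum_triple_eq_sum_sum_sum]
  refine Finset.sum_congr rfl fun c _ => ?_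
  simp only [mul_div_assoc, ← Finset.mul_sum, ← Finset.sum_mul, ← Finset.sum_div,
    ← lawRV_snd_eq_sum, ← lawRV_eq_sum_sum]
  rw [← mul_div_assoc, mul_self_div_self]

theorem cmiRV_eq_sum (p : Ω → ℝ) (X : Ω → α) (Y : Ω → β) (Z : Ω → γ) :
    cmiRV p X Y Z = ∑ v, lawRV p (fun ω => (X ω, Y ω, Z ω)) v *
      (Real.logb 2 (lawRV p (fun ω => (X ω, Y ω, Z ω)) v) + Real.logb 2 (lawRV p Z v.2.2)
        - Real.logb 2 (lawRV p (fun ω => (X ω, Z ω)) (v.1, v.2.2))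
        - Real.logb 2 (lawRV p (fun ω => (Y ω, Z ω)) v.2)) := by
  have hXZ := entRV_comp_eq_sum p (fun ω => (X ω, Y ω, Z ω)) fun v => (v.1, v.2.2)
  have hYZ := entRV_comp_eq_sum p (fun ω => (X ω, Y ω, Z ω)) fun v => v.2
  have hZ := entRV_comp_eq_sum p (fun ω => (X ω, Y ω, Z ω)) fun v => v.2.2
  dsimp only at hXZ hYZ hZ
  rw [cmiRV, hXZ, hYZ, hZ, entRV_eq_lawRV p (fun ω => (X ω, Y ω, Z ω))]
  simp only [← Finset.sum_neg_distrib, ← Finset.sum_add_distrib, ← Finset.sum_sub_distrib]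
  exact Finset.sum_congr rfl fun v _ => by ring

-- Gibbs' inequality, comparing the law of `(X, Y, Z)` with `P(x,z) P(y,z) / P(z)`
theorem cmiRV_nonneg (hp : ∀ ω, 0 ≤ p ω) (X : Ω → α) (Y : Ω → β) (Z : Ω → γ) :
    0 ≤ cmiRV p X Y Z := by
  rw [cmiRV_eq_sum]
  refine le_of_eq_of_le ?_ (Finset.sum_le_sum fun v _ =>
    sub_mul_div_le_mul_logb (lawRV_nonneg hp _ v)
      (lawRV_le_lawRV_comp hp _ (fun v => (v.1, v.2.2)) v)
      (lawRV_le_lawRV_comp hp _ Prod.snd v) (lawRV_le_lawRV_comp hp _ (fun v => v.2.2) v))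
  rw [← Finset.sum_div, Finset.sum_sub_distrib, sum_lawRV_mul_lawRV_div, sub_self, zero_div]

theorem cmiRV_eq_zero_of_lawRV_eq_mul (hp : ∀ ω, 0 ≤ p ω) {X : Ω → α} {Y : Ω → β} {Z : Ω → γ}
    (f : α → γ → ℝ) (g : β → γ → ℝ)
    (h : ∀ a b c, lawRV p (fun ω => (X ω, Y ω, Z ω)) (a, b, c) = f a c * g b c) :
    cmiRV p X Y Z = 0 := by
  have hXZ : ∀ a c, lawRV p (fun ω => (X ω, Z ω)) (a, c) = f a c * ∑ b, g b c := fun a c => by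
    simp [lawRV_pair_eq_sum p X Y Z, h, Finset.mul_sum]
  have hYZ : ∀ b c, lawRV p (fun ω => (Y ω, Z ω)) (b, c) = (∑ a, f a c) * g b c := fun b c => by
    simp [lawRV_snd_eq_sum p X (fun ω => (Y ω, Z ω)) (b, c), h, Finset.sum_mul]
  have hZ : ∀ c, lawRV p Z c = (∑ a, f a c) * ∑ b, g b c := fun c => by
    simp [lawRV_eq_sum_sum p X Y Z, h, Finset.sum_mul_sum]
  rw [cmiRV_eq_sum]
  refine Finset.sum_eq_zero fun ⟨a, b, c⟩ _ => ?_
  rcases (lawRV_nonneg hp _ (a, b, c)).eq_or_lt with h0 | hpos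
  · rw [← h0, zero_mul]
  have hXZpos := hpos.trans_le (lawRV_le_lawRV_comp hp _ (fun v => (v.1, v.2.2)) (a, b, c))
  have hYZpos := hpos.trans_le (lawRV_le_lawRV_comp hp _ Prod.snd (a, b, c))
  have hZpos := hpos.trans_le (lawRV_le_lawRV_comp hp _ (fun v => v.2.2) (a, b, c))
  dsimp only at hXZpos hYZpos hZpos ⊢
  refine mul_eq_zero_of_right _ ?_
  rw [sub_sub, sub_eq_zero, ← Real.logb_mul hpos.ne' hZpos.ne',
    ← Real.logb_mul hXZpos.ne' hYZpos.ne', h, hXZ, hYZ, hZ]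
  ring_nf

theorem cmiRV_eq_zero_of_equiv {R : Type*} [Fintype R] (hp : ∀ ω, 0 ≤ p ω)
    (e : Ω ≃ (α × β × γ) × R) (f : α → γ → ℝ) (g : β → γ → ℝ)
    (h : ∀ a b c, ∑ r, p (e.symm ((a, b, c), r)) = f a c * g b c) :
    cmiRV p (fun ω => (e ω).1.1) (fun ω => (e ω).1.2.1) (fun ω => (e ω).1.2.2) = 0 :=
  cmiRV_eq_zero_of_lawRV_eq_mul hp f g fun a b c =>
    (lawRV_fst_equiv p e (a, b, c)).trans (h a b c)

theorem cmiRV_congr (p : Ω → ℝ) {X : Ω → α} {Y : Ω → β} {Z : Ω → γ} {X' : Ω → δ}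
    {Y' : Ω → ε} {Z' : Ω → ζ} {f : α → δ} {g : β → ε} {h : γ → ζ}
    (hf : Function.Injective f) (hg : Function.Injective g) (hh : Function.Injective h)
    (hX : ∀ ω, X' ω = f (X ω)) (hY : ∀ ω, Y' ω = g (Y ω)) (hZ : ∀ ω, Z' ω = h (Z ω)) :
    cmiRV p X' Y' Z' = cmiRV p X Y Z := by
  unfold cmiRV
  rw [entRV_congr p (X := fun ω => (X ω, Z ω)) (hf.prodMap hh) fun ω => by simp [hX, hZ],
    entRV_congr p (X := fun ω => (Y ω, Z ω)) (hg.prodMap hh) fun ω => by simp [hY, hZ],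
    entRV_congr p (X := fun ω => (X ω, Y ω, Z ω)) (hf.prodMap (hg.prodMap hh))
      fun ω => by simp [hX, hY, hZ],
    entRV_congr p hh hZ]

theorem cmiRV_comm (p : Ω → ℝ) (X : Ω → α) (Y : Ω → β) (Z : Ω → γ) :
    cmiRV p X Y Z = cmiRV p Y X Z := by
  have h : entRV p (fun ω => (Y ω, X ω, Z ω)) = entRV p (fun ω => (X ω, Y ω, Z ω)) :=
    entRV_congr p (f := fun t : α × β × γ => (t.2.1, t.1, t.2.2))
      (fun _ _ h => by simp only [Prod.ext_iff] at h ⊢; tauto) fun _ => rfl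
  rw [cmiRV, cmiRV, h]
  ring

theorem cmiRV_pair_right (p : Ω → ℝ) (X : Ω → α) (Y : Ω → β) (W : Ω → δ) (Z : Ω → γ) :
    cmiRV p X (fun ω => (Y ω, W ω)) Z =
      cmiRV p X Y Z + cmiRV p X W (fun ω => (Y ω, Z ω)) := by
  have h₁ : entRV p (fun ω => ((Y ω, W ω), Z ω)) = entRV p (fun ω => (W ω, Y ω, Z ω)) :=
    entRV_congr p (f := fun t : δ × β × γ => ((t.2.1, t.1), t.2.2))
      (fun _ _ h => by simp only [Prod.ext_iff] at h ⊢; tauto) fun _ => rfl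
  have h₂ : entRV p (fun ω => (X ω, (Y ω, W ω), Z ω)) =
      entRV p (fun ω => (X ω, W ω, Y ω, Z ω)) :=
    entRV_congr p (f := fun t : α × δ × β × γ => (t.1, (t.2.2.1, t.2.1), t.2.2.2))
      (fun _ _ h => by simp only [Prod.ext_iff] at h ⊢; tauto) fun _ => rfl
  rw [cmiRV, cmiRV, cmiRV, h₁, h₂]
  ring

theorem cmiRV_pair_cond (p : Ω → ℝ) (X : Ω → α) (Y : Ω → β) (W : Ω → δ) (Z : Ω → γ) :
    cmiRV p X Y (fun ω => (W ω, Z ω)) = cmiRV p X Y Z +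
      cmiRV p (fun ω => (X ω, Y ω)) W Z - cmiRV p X W Z - cmiRV p Y W Z := by
  have h₁ : entRV p (fun ω => ((X ω, Y ω), Z ω)) = entRV p (fun ω => (X ω, Y ω, Z ω)) :=
    entRV_congr p (f := fun t : α × β × γ => ((t.1, t.2.1), t.2.2))
      (fun _ _ h => by simp only [Prod.ext_iff] at h ⊢; tauto) fun _ => rfl
  have h₂ : entRV p (fun ω => ((X ω, Y ω), W ω, Z ω)) =
      entRV p (fun ω => (X ω, Y ω, W ω, Z ω)) :=
    entRV_congr p (f := fun t : α × β × δ × γ => ((t.1, t.2.1), t.2.2))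
      (fun _ _ h => by simp only [Prod.ext_iff] at h ⊢; tauto) fun _ => rfl
  rw [cmiRV, cmiRV, cmiRV, cmiRV, cmiRV, h₁, h₂]
  ring

theorem cmiRV_comp_right_le (hp : ∀ ω, 0 ≤ p ω) (X : Ω → α) (Y : Ω → β) (Z : Ω → γ)
    (g : β → δ) : cmiRV p X (fun ω => g (Y ω)) Z ≤ cmiRV p X Y Z := by
  have hY : cmiRV p X (fun ω => (g (Y ω), Y ω)) Z = cmiRV p X Y Z :=
    cmiRV_congr p (f := id) (g := fun b => (g b, b)) (h := id) Function.injective_id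
      (fun _ _ h => (Prod.ext_iff.1 h).2) Function.injective_id (fun _ => rfl) (fun _ => rfl)
      (fun _ => rfl)
  have h := cmiRV_pair_right p X (fun ω => g (Y ω)) Y Z
  rw [hY] at h
  linarith [cmiRV_nonneg hp X Y fun ω => (g (Y ω), Z ω)]

theorem cmiRV_comp_eq_zero (hp : ∀ ω, 0 ≤ p ω) {X : Ω → α} {Y : Ω → β} {Z : Ω → γ}
    (h : cmiRV p X Y Z = 0) (f : α → δ) (g : β → ε) :
    cmiRV p (fun ω => f (X ω)) (fun ω => g (Y ω)) Z = 0 := by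
  refine le_antisymm ?_ (cmiRV_nonneg hp _ _ _)
  calc cmiRV p (fun ω => f (X ω)) (fun ω => g (Y ω)) Z
      ≤ cmiRV p (fun ω => f (X ω)) Y Z := cmiRV_comp_right_le hp _ Y Z g
    _ = cmiRV p Y (fun ω => f (X ω)) Z := cmiRV_comm p _ Y Z
    _ ≤ cmiRV p Y X Z := cmiRV_comp_right_le hp Y X Z f
    _ = 0 := (cmiRV_comm p Y X Z).trans h

theorem cmiRV_pair_cond_eq_zero (hp : ∀ ω, 0 ≤ p ω) {X : Ω → α} {Y : Ω → β} {W : Ω → δ}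
    {Z : Ω → γ} (hXY : cmiRV p X Y Z = 0) (hW : cmiRV p W (fun ω => (X ω, Y ω)) Z = 0) :
    cmiRV p X Y (fun ω => (W ω, Z ω)) = 0 := by
  rw [cmiRV_comm] at hW
  refine le_antisymm ?_ (cmiRV_nonneg hp _ _ _)
  rw [cmiRV_pair_cond, hXY, hW]
  linarith [cmiRV_nonneg hp X W Z, cmiRV_nonneg hp Y W Z]

theorem entRV_pair_pair_eq {X : Ω → α} {Y : Ω → β} {Z : Ω → γ} {W : Ω → δ}
    (hX : cmiRV p X (fun ω => (Y ω, W ω)) Z = 0) (hY : cmiRV p Y Z W = 0) :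
    entRV p (fun ω => ((X ω, Y ω), (Z ω, W ω))) = entRV p (fun ω => (X ω, Z ω)) +
      entRV p (fun ω => (Y ω, W ω)) + entRV p (fun ω => (Z ω, W ω)) - entRV p Z - entRV p W := by
  have h₁ : entRV p (fun ω => ((X ω, Y ω), (Z ω, W ω))) =
      entRV p (fun ω => (X ω, (Y ω, W ω), Z ω)) :=
    entRV_congr p (f := fun t : α × (β × δ) × γ => ((t.1, t.2.1.1), (t.2.2, t.2.1.2)))
      (fun _ _ h => by simp only [Prod.ext_iff] at h ⊢; tauto) fun _ => rfl
  have h₂ : entRV p (fun ω => ((Y ω, W ω), Z ω)) = entRV p (fun ω => (Y ω, Z ω, W ω)) :=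
    entRV_congr p (f := fun t : β × γ × δ => ((t.1, t.2.2), t.2.1))
      (fun _ _ h => by simp only [Prod.ext_iff] at h ⊢; tauto) fun _ => rfl
  rw [cmiRV, h₂] at hX
  rw [cmiRV] at hY
  linarith

end CondMutualInfo

section TwoBlocks

variable {Ω α₁ α₂ β₁ β₂ γ δ : Type*} [Fintype Ω] [Fintype α₁] [DecidableEq α₁]
  [Fintype α₂] [DecidableEq α₂] [Fintype β₁] [DecidableEq β₁] [Fintype β₂] [DecidableEq β₂]
  [Fintype γ] [DecidableEq γ] [Fintype δ] [DecidableEq δ] {p : Ω → ℝ}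

theorem cmiRV_pair_pair_eq_add (hp : ∀ ω, 0 ≤ p ω) {X₁ : Ω → α₁} {X₂ : Ω → α₂}
    {Y₁ : Ω → β₁} {Y₂ : Ω → β₂} {Z : Ω → γ} {W : Ω → δ}
    (hX : cmiRV p (fun ω => (X₁ ω, X₂ ω)) (fun ω => ((Y₁ ω, Y₂ ω), W ω)) Z = 0)
    (hY : cmiRV p (fun ω => (Y₁ ω, Y₂ ω)) Z W = 0) :
    cmiRV p (fun ω => (X₁ ω, Y₁ ω)) (fun ω => (X₂ ω, Y₂ ω)) (fun ω => (Z ω, W ω)) =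
      cmiRV p X₁ X₂ Z + cmiRV p Y₁ Y₂ W := by
  have h₁ := entRV_pair_pair_eq (cmiRV_comp_eq_zero hp hX Prod.fst fun t => (t.1.1, t.2))
    (cmiRV_comp_eq_zero hp hY Prod.fst id)
  have h₂ := entRV_pair_pair_eq (cmiRV_comp_eq_zero hp hX Prod.snd fun t => (t.1.2, t.2))
    (cmiRV_comp_eq_zero hp hY Prod.snd id)
  have h₁₂ := entRV_pair_pair_eq hX hY
  have hXY : entRV p (fun ω => ((X₁ ω, Y₁ ω), (X₂ ω, Y₂ ω), (Z ω, W ω))) =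
      entRV p (fun ω => (((X₁ ω, X₂ ω), (Y₁ ω, Y₂ ω)), (Z ω, W ω))) :=
    entRV_congr p (f := fun t : ((α₁ × α₂) × (β₁ × β₂)) × (γ × δ) =>
        ((t.1.1.1, t.1.2.1), (t.1.1.2, t.1.2.2), t.2))
      (fun _ _ h => by simp only [Prod.ext_iff] at h ⊢; tauto) fun _ => rfl
  have hX₁₂ : entRV p (fun ω => ((X₁ ω, X₂ ω), Z ω)) = entRV p (fun ω => (X₁ ω, X₂ ω, Z ω)) :=
    entRV_congr p (f := fun t : α₁ × α₂ × γ => ((t.1, t.2.1), t.2.2))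
      (fun _ _ h => by simp only [Prod.ext_iff] at h ⊢; tauto) fun _ => rfl
  have hY₁₂ : entRV p (fun ω => ((Y₁ ω, Y₂ ω), W ω)) = entRV p (fun ω => (Y₁ ω, Y₂ ω, W ω)) :=
    entRV_congr p (f := fun t : β₁ × β₂ × δ => ((t.1, t.2.1), t.2.2))
      (fun _ _ h => by simp only [Prod.ext_iff] at h ⊢; tauto) fun _ => rfl
  rw [cmiRV, cmiRV, cmiRV, hXY, h₁, h₂, h₁₂, hX₁₂, hY₁₂]
  ring

end TwoBlocks

theorem Channel2.sum_mul_mul_W {X1 X2 Y1 Y2 Zc : Type} [Fintype X1] [Fintype X2] [Fintype Y1]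
    [Fintype Y2] [Fintype Zc] (ch : Channel2 X1 X2 Y1 Y2 Zc) {k₁ : X1 → ℝ} {k₂ : X2 → ℝ}
    (h₁ : ∑ x, k₁ x = 1) (h₂ : ∑ x, k₂ x = 1) :
    ∑ r : X1 × X2 × Y1 × Y2 × Zc,
      k₁ r.1 * k₂ r.2.1 * ch.W r.1 r.2.1 r.2.2.1 r.2.2.2.1 r.2.2.2.2 = 1 := by
  simp only [Fintype.sum_prod_type, ← Finset.mul_sum, ch.sum_one, mul_one, h₂, h₁]

section Network

variable {Q U0 U1 U2 V0 V1 V2 X1 X2 Y1 Y2 Zc : Type} [Fintype Q] [Fintype U0] [Fintype U1]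
  [Fintype U2] [Fintype V0] [Fintype V1] [Fintype V2] [Fintype X1] [Fintype X2] [Fintype Y1]
  [Fintype Y2] [Fintype Zc]

noncomputable def SL.networkPMF (ch : Channel2 X1 X2 Y1 Y2 Zc) (pq : Q → ℝ) (pu0 : Q → U0 → ℝ)
    (pu12 : U0 → U1 × U2 → ℝ) (pv0 : Q → V0 → ℝ) (pv12 : V0 → V1 × V2 → ℝ)
    (px1 : U0 × U1 × U2 → X1 → ℝ) (px2 : V0 × V1 × V2 → X2 → ℝ)
    (ω : SL Q U0 U1 U2 V0 V1 V2 X1 X2 Y1 Y2 Zc) : ℝ :=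
  pq ω.q * pu0 ω.q ω.u0 * pu12 ω.u0 (ω.u1, ω.u2) * pv0 ω.q ω.v0 * pv12 ω.v0 (ω.v1, ω.v2) *
    px1 (ω.u0, ω.u1, ω.u2) ω.x1 * px2 (ω.v0, ω.v1, ω.v2) ω.x2 * ch.W ω.x1 ω.x2 ω.y1 ω.y2 ω.z

def SL.equivQ : SL Q U0 U1 U2 V0 V1 V2 X1 X2 Y1 Y2 Zc ≃
    (Q × ((U1 × V1) × (U2 × V2)) × (U0 × V0 × Zc)) × (X1 × X2 × Y1 × Y2) where
  toFun ω := ((ω.q, ((ω.u1, ω.v1), (ω.u2, ω.v2)), (ω.u0, ω.v0, ω.z)), (ω.x1, ω.x2, ω.y1, ω.y2))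
  invFun := fun ((q, ((u1, v1), (u2, v2)), (u0, v0, z)), (x1, x2, y1, y2)) =>
    ⟨q, u0, u1, u2, v0, v1, v2, x1, x2, y1, y2, z⟩
  left_inv _ := rfl
  right_inv _ := rfl

def SL.equivU12 : SL Q U0 U1 U2 V0 V1 V2 X1 X2 Y1 Y2 Zc ≃
    ((U1 × U2) × ((V1 × V2) × V0) × U0) × (Q × X1 × X2 × Y1 × Y2 × Zc) where
  toFun ω := (((ω.u1, ω.u2), ((ω.v1, ω.v2), ω.v0), ω.u0), (ω.q, ω.x1, ω.x2, ω.y1, ω.y2, ω.z))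
  invFun := fun (((u1, u2), ((v1, v2), v0), u0), (q, x1, x2, y1, y2, z)) =>
    ⟨q, u0, u1, u2, v0, v1, v2, x1, x2, y1, y2, z⟩
  left_inv _ := rfl
  right_inv _ := rfl

def SL.equivV12 : SL Q U0 U1 U2 V0 V1 V2 X1 X2 Y1 Y2 Zc ≃
    ((V1 × V2) × U0 × V0) × ((Q × U1 × U2) × X1 × X2 × Y1 × Y2 × Zc) where
  toFun ω := (((ω.v1, ω.v2), ω.u0, ω.v0), ((ω.q, ω.u1, ω.u2), ω.x1, ω.x2, ω.y1, ω.y2, ω.z))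
  invFun := fun (((v1, v2), u0, v0), ((q, u1, u2), x1, x2, y1, y2, z)) =>
    ⟨q, u0, u1, u2, v0, v1, v2, x1, x2, y1, y2, z⟩
  left_inv _ := rfl
  right_inv _ := rfl

variable (ch : Channel2 X1 X2 Y1 Y2 Zc) {pq : Q → ℝ} {pu0 : Q → U0 → ℝ} {pu12 : U0 → U1 × U2 → ℝ}
  {pv0 : Q → V0 → ℝ} {pv12 : V0 → V1 × V2 → ℝ} {px1 : U0 × U1 × U2 → X1 → ℝ}
  {px2 : V0 × V1 × V2 → X2 → ℝ}

theorem SL.networkPMF_nonneg (hpq : IsPMF pq) (hpu0 : IsKernel pu0) (hpu12 : IsKernel pu12)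
    (hpv0 : IsKernel pv0) (hpv12 : IsKernel pv12) (hpx1 : IsKernel px1) (hpx2 : IsKernel px2)
    (ω : SL Q U0 U1 U2 V0 V1 V2 X1 X2 Y1 Y2 Zc) :
    0 ≤ SL.networkPMF ch pq pu0 pu12 pv0 pv12 px1 px2 ω := by
  have := hpq.1 ω.q
  have := (hpu0 ω.q).1 ω.u0
  have := (hpu12 ω.u0).1 (ω.u1, ω.u2)
  have := (hpv0 ω.q).1 ω.v0
  have := (hpv12 ω.v0).1 (ω.v1, ω.v2)
  have := (hpx1 (ω.u0, ω.u1, ω.u2)).1 ω.x1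
  have := (hpx2 (ω.v0, ω.v1, ω.v2)).1 ω.x2
  have := ch.nonneg ω.x1 ω.x2 ω.y1 ω.y2 ω.z
  unfold SL.networkPMF
  positivity

variable [DecidableEq U0] [DecidableEq V0] [DecidableEq V1] [DecidableEq V2]

theorem SL.cmiRV_v12_eq_zero (hp : ∀ ω, 0 ≤ SL.networkPMF ch pq pu0 pu12 pv0 pv12 px1 px2 ω)
    (hpu12 : IsKernel pu12) (hpx1 : IsKernel px1) (hpx2 : IsKernel px2) :
    cmiRV (SL.networkPMF ch pq pu0 pu12 pv0 pv12 px1 px2) (fun ω => (ω.v1, ω.v2))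
      (fun ω => ω.u0) (fun ω => ω.v0) = 0 :=
  cmiRV_eq_zero_of_equiv hp SL.equivV12 (fun s v0 => pv12 v0 s)
    (fun u0 v0 => ∑ q, pq q * pu0 q u0 * pv0 q v0) <| by
    rintro ⟨v1, v2⟩ u0 v0
    rw [Fintype.sum_prod_type, Fintype.sum_prod_type]
    simp only [Finset.mul_sum]
    refine Finset.sum_congr rfl fun q _ => ?_
    rw [← mul_one (_ * _), ← (hpu12 u0).2, Finset.mul_sum]
    refine Finset.sum_congr rfl fun u _ => ?_
    rw [← mul_one (_ * _), ← ch.sum_mul_mul_W (hpx1 (u0, u)).2 (hpx2 (v0, v1, v2)).2,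
      Finset.mul_sum]
    refine Finset.sum_congr rfl fun r _ => ?_
    simp only [SL.networkPMF, SL.equivV12, Equiv.coe_fn_symm_mk]
    ring

variable [DecidableEq U1] [DecidableEq U2]

theorem SL.cmiRV_u12_eq_zero (hp : ∀ ω, 0 ≤ SL.networkPMF ch pq pu0 pu12 pv0 pv12 px1 px2 ω)
    (hpx1 : IsKernel px1) (hpx2 : IsKernel px2) :
    cmiRV (SL.networkPMF ch pq pu0 pu12 pv0 pv12 px1 px2) (fun ω => (ω.u1, ω.u2))
      (fun ω => ((ω.v1, ω.v2), ω.v0)) (fun ω => ω.u0) = 0 :=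
  cmiRV_eq_zero_of_equiv hp SL.equivU12 (fun s u0 => pu12 u0 s)
    (fun ((v1, v2), v0) u0 => pv12 v0 (v1, v2) * ∑ q, pq q * pu0 q u0 * pv0 q v0) <| by
    rintro ⟨u1, u2⟩ ⟨⟨v1, v2⟩, v0⟩ u0
    rw [Fintype.sum_prod_type]
    simp only [Finset.mul_sum]
    refine Finset.sum_congr rfl fun q _ => ?_
    rw [← mul_one (_ * _), ← ch.sum_mul_mul_W (hpx1 (u0, u1, u2)).2 (hpx2 (v0, v1, v2)).2,
      Finset.mul_sum]
    refine Finset.sum_congr rfl fun r _ => ?_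
    simp only [SL.networkPMF, SL.equivU12, Equiv.coe_fn_symm_mk]
    ring

variable [DecidableEq Q] [DecidableEq Zc]

theorem SL.cmiRV_q_eq_zero (hp : ∀ ω, 0 ≤ SL.networkPMF ch pq pu0 pu12 pv0 pv12 px1 px2 ω) :
    cmiRV (SL.networkPMF ch pq pu0 pu12 pv0 pv12 px1 px2) (fun ω => ω.q)
      (fun ω => ((ω.u1, ω.v1), (ω.u2, ω.v2))) (fun ω => (ω.u0, ω.v0, ω.z)) = 0 :=
  cmiRV_eq_zero_of_equiv hp SL.equivQ (fun q (u0, v0, _) => pq q * pu0 q u0 * pv0 q v0)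
    (fun ((u1, v1), (u2, v2)) (u0, v0, z) => pu12 u0 (u1, u2) * pv12 v0 (v1, v2) *
      ∑ r : X1 × X2 × Y1 × Y2, px1 (u0, u1, u2) r.1 * px2 (v0, v1, v2) r.2.1 *
        ch.W r.1 r.2.1 r.2.2.1 r.2.2.2 z) <| by
    rintro q ⟨⟨u1, v1⟩, u2, v2⟩ ⟨u0, v0, z⟩
    simp only [Finset.mul_sum]
    refine Finset.sum_congr rfl fun r _ => ?_
    simp only [SL.networkPMF, SL.equivQ, Equiv.coe_fn_symm_mk]
    ring

end Network

theorem constraint_implies_conditional_independence_general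
    {X1 X2 Y1 Y2 Zc : Type} [Fintype X1] [Fintype X2]
    [Fintype Y1] [Fintype Y2] [Fintype Zc] [DecidableEq Zc]
    (ch : Channel2 X1 X2 Y1 Y2 Zc)
    {Q U0 U1 U2 V0 V1 V2 : Type} [Fintype Q] [DecidableEq Q] [Fintype U0] [DecidableEq U0]
    [Fintype U1] [DecidableEq U1] [Fintype U2] [DecidableEq U2] [Fintype V0] [DecidableEq V0]
    [Fintype V1] [DecidableEq V1] [Fintype V2] [DecidableEq V2]
    (pq : Q → ℝ) (pu0 : Q → U0 → ℝ) (pu12 : U0 → U1 × U2 → ℝ)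
    (pv0 : Q → V0 → ℝ) (pv12 : V0 → V1 × V2 → ℝ)
    (px1 : U0 × U1 × U2 → X1 → ℝ) (px2 : V0 × V1 × V2 → X2 → ℝ)
    (hpq : IsPMF pq) (hpu0 : IsKernel pu0) (hpu12 : IsKernel pu12)
    (hpv0 : IsKernel pv0) (hpv12 : IsKernel pv12)
    (hpx1 : IsKernel px1) (hpx2 : IsKernel px2)
    (p : SL Q U0 U1 U2 V0 V1 V2 X1 X2 Y1 Y2 Zc → ℝ)
    (hp : ∀ ω, p ω = pq ω.q * pu0 ω.q ω.u0 * pu12 ω.u0 (ω.u1, ω.u2) *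
      pv0 ω.q ω.v0 * pv12 ω.v0 (ω.v1, ω.v2) * px1 (ω.u0, ω.u1, ω.u2) ω.x1 *
      px2 (ω.v0, ω.v1, ω.v2) ω.x2 * ch.W ω.x1 ω.x2 ω.y1 ω.y2 ω.z)
    (hconstr : cmiRV p (fun ω => (ω.u1, ω.u2, ω.v1, ω.v2)) (fun ω => ω.z) (fun ω => (ω.u0, ω.v0)) ≤
      cmiRV p (fun ω => (ω.u1, ω.v1)) (fun ω => ω.z) (fun ω => (ω.u0, ω.v0)) +
      cmiRV p (fun ω => (ω.u2, ω.v2)) (fun ω => ω.z) (fun ω => (ω.u0, ω.v0)) -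
      cmiRV p (fun ω => ω.u1) (fun ω => ω.u2) (fun ω => ω.u0) -
      cmiRV p (fun ω => ω.v1) (fun ω => ω.v2) (fun ω => ω.v0))
    :
    cmiRV p (fun ω => (ω.u1, ω.v1)) (fun ω => (ω.u2, ω.v2))
      (fun ω => (ω.q, ω.u0, ω.v0, ω.z)) = 0 := by
  obtain rfl : p = SL.networkPMF ch pq pu0 pu12 pv0 pv12 px1 px2 := funext hp
  set p := SL.networkPMF ch pq pu0 pu12 pv0 pv12 px1 px2
  have hp0 := SL.networkPMF_nonneg ch hpq hpu0 hpu12 hpv0 hpv12 hpx1 hpx2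
  have hsplit := cmiRV_pair_pair_eq_add hp0 (SL.cmiRV_u12_eq_zero ch hp0 hpx1 hpx2)
    (SL.cmiRV_v12_eq_zero ch hp0 hpu12 hpx1 hpx2)
  have hjoint : cmiRV p (fun ω => ((ω.u1, ω.v1), (ω.u2, ω.v2))) (fun ω => ω.z)
      (fun ω => (ω.u0, ω.v0)) =
      cmiRV p (fun ω => (ω.u1, ω.u2, ω.v1, ω.v2)) (fun ω => ω.z) (fun ω => (ω.u0, ω.v0)) :=
    cmiRV_congr p (f := fun t => ((t.1, t.2.2.1), (t.2.1, t.2.2.2))) (g := id) (h := id)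
      (fun _ _ h => by simp only [Prod.ext_iff] at h ⊢; tauto) Function.injective_id
      Function.injective_id (fun _ => rfl) (fun _ => rfl) (fun _ => rfl)
  have hZ : cmiRV p (fun ω => (ω.u1, ω.v1)) (fun ω => (ω.u2, ω.v2))
      (fun ω => (ω.z, ω.u0, ω.v0)) = 0 := by
    refine le_antisymm ?_ (cmiRV_nonneg hp0 _ _ _)
    rw [cmiRV_pair_cond, hjoint, hsplit]
    linarith [hconstr]
  have hZ' : cmiRV p (fun ω => (ω.u1, ω.v1)) (fun ω => (ω.u2, ω.v2))
      (fun ω => (ω.u0, ω.v0, ω.z)) = 0 := by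
    rw [← hZ]
    exact cmiRV_congr p (f := id) (g := id) (h := fun t : Zc × U0 × V0 => (t.2.1, t.2.2, t.1))
      Function.injective_id Function.injective_id
      (fun _ _ h => by simp only [Prod.ext_iff] at h ⊢; tauto)
      (fun _ => rfl) (fun _ => rfl) (fun _ => rfl)
  exact cmiRV_pair_cond_eq_zero hp0 hZ' (SL.cmiRV_q_eq_zero ch hp0)

/-- Remark 2: the constraint of Theorem 1 holds only if
`I(U1,V1; U2,V2 | Q,U0,V0,Z) = 0`. -/
theorem constraint_implies_conditional_independence
    {X1 X2 Y1 Y2 Zc : Type} [Fintype X1] [DecidableEq X1] [Fintype X2] [DecidableEq X2]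
    [Fintype Y1] [DecidableEq Y1] [Fintype Y2] [DecidableEq Y2] [Fintype Zc] [DecidableEq Zc]
    (ch : Channel2 X1 X2 Y1 Y2 Zc)
    {Q U0 U1 U2 V0 V1 V2 : Type} [Fintype Q] [DecidableEq Q] [Fintype U0] [DecidableEq U0]
    [Fintype U1] [DecidableEq U1] [Fintype U2] [DecidableEq U2] [Fintype V0] [DecidableEq V0]
    [Fintype V1] [DecidableEq V1] [Fintype V2] [DecidableEq V2]
    (pq : Q → ℝ) (pu0 : Q → U0 → ℝ) (pu12 : U0 → U1 × U2 → ℝ)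
    (pv0 : Q → V0 → ℝ) (pv12 : V0 → V1 × V2 → ℝ)
    (px1 : U0 × U1 × U2 → X1 → ℝ) (px2 : V0 × V1 × V2 → X2 → ℝ)
    (hpq : IsPMF pq) (hpu0 : IsKernel pu0) (hpu12 : IsKernel pu12)
    (hpv0 : IsKernel pv0) (hpv12 : IsKernel pv12)
    (hpx1 : IsKernel px1) (hpx2 : IsKernel px2)
    (p : SL Q U0 U1 U2 V0 V1 V2 X1 X2 Y1 Y2 Zc → ℝ)
    (hp : ∀ ω, p ω = pq ω.q * pu0 ω.q ω.u0 * pu12 ω.u0 (ω.u1, ω.u2) *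
      pv0 ω.q ω.v0 * pv12 ω.v0 (ω.v1, ω.v2) * px1 (ω.u0, ω.u1, ω.u2) ω.x1 *
      px2 (ω.v0, ω.v1, ω.v2) ω.x2 * ch.W ω.x1 ω.x2 ω.y1 ω.y2 ω.z)
    (hconstr : cmiRV p (fun ω => (ω.u1, ω.u2, ω.v1, ω.v2)) (fun ω => ω.z) (fun ω => (ω.u0, ω.v0)) ≤
      cmiRV p (fun ω => (ω.u1, ω.v1)) (fun ω => ω.z) (fun ω => (ω.u0, ω.v0)) +
      cmiRV p (fun ω => (ω.u2, ω.v2)) (fun ω => ω.z) (fun ω => (ω.u0, ω.v0)) -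
      cmiRV p (fun ω => ω.u1) (fun ω => ω.u2) (fun ω => ω.u0) -
      cmiRV p (fun ω => ω.v1) (fun ω => ω.v2) (fun ω => ω.v0))
    :
    cmiRV p (fun ω => (ω.u1, ω.v1)) (fun ω => (ω.u2, ω.v2))
      (fun ω => (ω.q, ω.u0, ω.v0, ω.z)) = 0 :=
  constraint_implies_conditional_independence_general ch pq pu0 pu12 pv0 pv12 px1 px2 hpq hpu0 hpu12
    hpv0 hpv12 hpx1 hpx2 p hp hconstr
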